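/- (Recovery sequence / Mosco limsup inequality.) For every φ ∈ L²(Q) and every sequence (α_n) ⊂ (0,1) with α_n → 0, the constant sequence φ_n := φ satisfies limsup_{n→∞} E_{sg,α_n}(φ) ≤ I_K(φ) in [0,∞]. Consequently, for every φ ∈ L²(Q) there exists a sequence converging strongly to φ in L²(Q) along which the limsup of E_{sg,α_n} is at most I_K(φ). -/

import Mathlib

open MeasureTheory Filter Set Classical
open scoped ENNReal

/-- The logarithmic potential `W_{sg,α}(s) = α((1+α+s)log(1+α+s) + (1+α−s)log(1+α−s))`.
(In Mathlib, `Real.log 0 = 0`, so the convention `0·log 0 = 0` holds automatically.) -/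
noncomputable def Wsg (α s : ℝ) : ℝ :=
  α * ((1 + α + s) * Real.log (1 + α + s) + (1 + α - s) * Real.log (1 + α - s))

/-- The Lebesgue measure restricted to `Q = Ω × (0,T')`. -/
noncomputable def Qmeasure (Ω : Set (EuclideanSpace ℝ (Fin 3))) (T' : ℝ) :
    Measure (EuclideanSpace ℝ (Fin 3) × ℝ) :=
  volume.restrict (Ω ×ˢ Set.Ioo 0 T')

/-- The functional `E_{sg,α} : L²(Q) → [0,∞]`, equal to `∫_Q W_{sg,α}(φ)` if
`|φ| ≤ 1+α` a.e. in `Q`, and `+∞` otherwise. -/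
noncomputable def Esg {X : Type*} [MeasurableSpace X] (μ : Measure X) (α : ℝ)
    (φ : X → ℝ) : ℝ≥0∞ :=
  if ∀ᵐ x ∂μ, |φ x| ≤ 1 + α then ∫⁻ x, ENNReal.ofReal (Wsg α (φ x)) ∂μ else ⊤

/-- The indicator functional `I_K` of `K = {φ ∈ L²(Q) : |φ| ≤ 1 a.e.}`. -/
noncomputable def IK {X : Type*} [MeasurableSpace X] (μ : Measure X)
    (φ : X → ℝ) : ℝ≥0∞ :=
  if ∀ᵐ x ∂μ, |φ x| ≤ 1 then 0 else ⊤

/-! Since `x log x ≤ x (x - 1)`, the potential `W_{sg,α}` is `O(α)` uniformly on `[-1, 1]`, so on a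
finite measure space `E_{sg,α}(φ) = O(α) → 0 = I_K(φ)` for `φ ∈ K`; off `K`, `I_K(φ) = ∞`. -/

lemma Real.mul_log_le_mul_sub_one {x : ℝ} (hx : 0 ≤ x) : x * Real.log x ≤ x * (x - 1) := by
  rcases hx.eq_or_lt with rfl | hx
  · simp
  · exact mul_le_mul_of_nonneg_left (Real.log_le_sub_one_of_pos hx) hx.le

lemma Wsg_le {α s : ℝ} (hα : 0 ≤ α) (hs : |s| ≤ 1) :
    Wsg α s ≤ 2 * α * (α + α ^ 2 + 1) := by
  rw [abs_le] at hs
  have hplus := Real.mul_log_le_mul_sub_one (x := 1 + α + s) (by linarith)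
  have hminus := Real.mul_log_le_mul_sub_one (x := 1 + α - s) (by linarith)
  unfold Wsg
  have hs2 : s ^ 2 ≤ 1 := by nlinarith
  nlinarith [mul_le_mul_of_nonneg_left (add_le_add hplus hminus) hα,
    mul_le_mul_of_nonneg_left hs2 hα]

section Functional

variable {X : Type*} [MeasurableSpace X] {μ : Measure X}

lemma Esg_le_of_abs_le_one {α : ℝ} (hα : 0 ≤ α) {φ : X → ℝ} (hφ : ∀ᵐ x ∂μ, |φ x| ≤ 1) :
    Esg μ α φ ≤ ENNReal.ofReal (2 * α * (α + α ^ 2 + 1)) * μ univ := by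
  have hdom : ∀ᵐ x ∂μ, |φ x| ≤ 1 + α := by
    filter_upwards [hφ] with x hx
    linarith
  rw [Esg, if_pos hdom, ← lintegral_const]
  exact lintegral_mono_ae <| by
    filter_upwards [hφ] with x hx
    exact ENNReal.ofReal_le_ofReal (Wsg_le hα hx)

lemma tendsto_Esg_of_abs_le_one [IsFiniteMeasure μ] {α : ℕ → ℝ} (hα : ∀ n, 0 ≤ α n)
    (hα0 : Tendsto α atTop (nhds 0)) {φ : X → ℝ} (hφ : ∀ᵐ x ∂μ, |φ x| ≤ 1) :
    Tendsto (fun n => Esg μ (α n) φ) atTop (nhds 0) := by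
  have hbound : Tendsto (fun n => ENNReal.ofReal (2 * α n * (α n + α n ^ 2 + 1)) * μ univ)
      atTop (nhds 0) := by
    have hreal : Tendsto (fun n => 2 * α n * (α n + α n ^ 2 + 1)) atTop (nhds 0) := by
      simpa using ((hα0.const_mul 2).mul ((hα0.add (hα0.pow 2)).add_const 1))
    simpa using ENNReal.Tendsto.mul_const (ENNReal.tendsto_ofReal hreal)
      (Or.inr (measure_ne_top μ univ))
  exact tendsto_of_tendsto_of_tendsto_of_le_of_le tendsto_const_nhds hbound
    (fun _ => zero_le) (fun n => Esg_le_of_abs_le_one (hα n) hφ)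

lemma limsup_Esg_le_IK [IsFiniteMeasure μ] {α : ℕ → ℝ} (hα : ∀ n, 0 ≤ α n)
    (hα0 : Tendsto α atTop (nhds 0)) (φ : X → ℝ) :
    atTop.limsup (fun n => Esg μ (α n) φ) ≤ IK μ φ := by
  unfold IK
  split_ifs with hφ
  · exact (tendsto_Esg_of_abs_le_one hα hα0 hφ).limsup_eq.le
  · exact le_top

end Functional

lemma isFiniteMeasure_Qmeasure {Ω : Set (EuclideanSpace ℝ (Fin 3))} (hΩ : Bornology.IsBounded Ω)
    (T' : ℝ) : IsFiniteMeasure (Qmeasure Ω T') :=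
  isFiniteMeasure_restrict.mpr (hΩ.prod (Metric.isBounded_Ioo 0 T')).measure_lt_top.ne

theorem stmt_3_general
    (T' : ℝ)
    (Ω : Set (EuclideanSpace ℝ (Fin 3)))
    (hΩb : Bornology.IsBounded Ω)
    (α : ℕ → ℝ) (hα : ∀ n, α n ∈ Set.Ioo (0 : ℝ) 1)
    (hα0 : Tendsto α atTop (nhds 0))
    (φ : EuclideanSpace ℝ (Fin 3) × ℝ → ℝ)
    (hφ : MemLp φ 2 (Qmeasure Ω T')) :
    atTop.limsup (fun n => Esg (Qmeasure Ω T') (α n) φ) ≤ IK (Qmeasure Ω T') φ ∧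
    ∃ φn : ℕ → EuclideanSpace ℝ (Fin 3) × ℝ → ℝ,
      (∀ n, MemLp (φn n) 2 (Qmeasure Ω T')) ∧
      Tendsto (fun n => eLpNorm (fun x => φn n x - φ x) 2 (Qmeasure Ω T')) atTop (nhds 0) ∧
      atTop.limsup (fun n => Esg (Qmeasure Ω T') (α n) (φn n)) ≤ IK (Qmeasure Ω T') φ := by
  have := isFiniteMeasure_Qmeasure hΩb T'
  have hlimsup := limsup_Esg_le_IK (μ := Qmeasure Ω T') (fun n => (hα n).1.le) hα0 φ
  refine ⟨hlimsup, fun _ => φ, fun _ => hφ, ?_, hlimsup⟩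
  simp

/-- **Recovery sequence / Mosco limsup inequality.** For every
`φ ∈ L²(Q)` and `α_n ∈ (0,1)` with `α_n → 0`, the constant sequence `φ_n = φ`
satisfies `limsup_n E_{sg,α_n}(φ) ≤ I_K(φ)`; consequently there is a sequence
converging strongly to `φ` in `L²(Q)` along which the limsup of `E_{sg,α_n}` is
at most `I_K(φ)`. -/
theorem stmt_3
    (T' : ℝ) (hT' : 0 < T')
    (Ω : Set (EuclideanSpace ℝ (Fin 3)))
    (hΩo : IsOpen Ω) (hΩc : IsConnected Ω) (hΩb : Bornology.IsBounded Ω)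
    (α : ℕ → ℝ) (hα : ∀ n, α n ∈ Set.Ioo (0 : ℝ) 1)
    (hα0 : Tendsto α atTop (nhds 0))
    (φ : EuclideanSpace ℝ (Fin 3) × ℝ → ℝ)
    (hφ : MemLp φ 2 (Qmeasure Ω T')) :
    atTop.limsup (fun n => Esg (Qmeasure Ω T') (α n) φ) ≤ IK (Qmeasure Ω T') φ ∧
    ∃ φn : ℕ → EuclideanSpace ℝ (Fin 3) × ℝ → ℝ,
      (∀ n, MemLp (φn n) 2 (Qmeasure Ω T')) ∧
      Tendsto (fun n => eLpNorm (fun x => φn n x - φ x) 2 (Qmeasure Ω T')) atTop (nhds 0) ∧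
      atTop.limsup (fun n => Esg (Qmeasure Ω T') (α n) (φn n)) ≤ IK (Qmeasure Ω T') φ :=
  stmt_3_general T' Ω hΩb α hα hα0 φ hφ
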